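/- arXiv:2110.02936 — 5 statements merged into one kernel-verified Lean document; each statement's English description precedes it below -/
import Mathlib

section
/- Let R be a commutative ring, I an ideal of R, and A an element of SL₂(R) lying in the kernel of the group homomorphism SL₂(R) → SL₂(R/I) induced by the quotient ring homomorphism R → R/I. Then tr(A) − 2 lies in the ideal I². -/
/-!
Write `A = 1 + N` with all entries of `N` in `I`. In the Leibniz expansion of `det (1 + N)`,
every non-identity permutation moves at least two indices, so its term is a product with two
off-diagonal factors from `I`; the identity term `∏ (1 + N i i)` is `1 + trace N` modulo `I ^ 2`.
Hence `det (1 + N) ≡ 1 + trace N` modulo `I ^ 2`, and `det A = 1` forces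
`trace A - 2 = trace N ∈ I ^ 2`.
-/

open Finset Matrix

namespace Ideal

variable {R ι : Type*} [CommRing R] (I : Ideal R)

theorem prod_mem_pow_card {s : Finset ι} {x : ι → R} (hx : ∀ i ∈ s, x i ∈ I) :
    ∏ i ∈ s, x i ∈ I ^ #s := by
  simpa only [prod_const] using prod_mem_prod (I := fun _ => I) hx

theorem prod_one_add_sub_one_add_sum_mem_sq [DecidableEq ι] {s : Finset ι} {x : ι → R}
    (hx : ∀ i ∈ s, x i ∈ I) : ∏ i ∈ s, (1 + x i) - (1 + ∑ i ∈ s, x i) ∈ I ^ 2 := by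
  induction s using Finset.induction_on with
  | empty => simp
  | insert a s ha ih =>
    have hxa : x a ∈ I := hx a (mem_insert_self a s)
    have hxs : ∀ i ∈ s, x i ∈ I := fun i hi => hx i (mem_insert_of_mem hi)
    have key : (1 + x a) * ∏ i ∈ s, (1 + x i) - (1 + (x a + ∑ i ∈ s, x i)) =
        (1 + x a) * (∏ i ∈ s, (1 + x i) - (1 + ∑ i ∈ s, x i)) + x a * ∑ i ∈ s, x i := by
      ring
    rw [prod_insert ha, sum_insert ha, key]
    exact add_mem (mul_mem_left _ _ (ih hxs)) (sq I ▸ mul_mem_mul hxa (I.sum_mem hxs))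

end Ideal

namespace Matrix

variable {n R : Type*} [Fintype n] [DecidableEq n] [CommRing R] {I : Ideal R}

theorem prod_one_add_apply_mem_sq_of_ne_one {N : Matrix n n R} (hN : ∀ i j, N i j ∈ I)
    {σ : Equiv.Perm n} (hσ : σ ≠ 1) : ∏ i, (1 + N) (σ i) i ∈ I ^ 2 := by
  rw [← prod_mul_prod_compl σ.support]
  refine Ideal.mul_mem_right _ _
    (Ideal.pow_le_pow_right (Equiv.Perm.two_le_card_support_of_ne_one hσ)
      (I.prod_mem_pow_card fun i hi => ?_))
  rw [add_apply, one_apply_ne (Equiv.Perm.mem_support.mp hi), zero_add]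
  exact hN _ _

theorem det_one_add_sub_one_add_trace_mem_sq {N : Matrix n n R} (hN : ∀ i j, N i j ∈ I) :
    det (1 + N) - (1 + trace N) ∈ I ^ 2 := by
  rw [det_apply', ← add_sum_erase _ _ (mem_univ 1), add_sub_right_comm]
  refine add_mem ?_ (sum_mem fun σ hσ => ?_)
  · simpa [trace] using I.prod_one_add_sub_one_add_sum_mem_sq (s := univ) fun i _ => hN i i
  · exact Ideal.mul_mem_left _ _ (prod_one_add_apply_mem_sq_of_ne_one hN (ne_of_mem_erase hσ))

namespace SpecialLinearGroup

theorem mem_ker_map_mk_iff {A : SpecialLinearGroup n R} :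
    A ∈ (map (Ideal.Quotient.mk I)).ker ↔ ∀ i j, ((A : Matrix n n R) - 1) i j ∈ I := by
  simp only [MonoidHom.mem_ker, SpecialLinearGroup.ext_iff, map_apply_coe,
    RingHom.mapMatrix_apply, map_apply, coe_one, sub_apply, ← Ideal.Quotient.eq]
  refine forall₂_congr fun i j => ?_
  rw [one_apply, one_apply]
  split_ifs <;> simp

theorem trace_sub_card_mem_sq_of_mem_ker_map {A : SpecialLinearGroup n R}
    (hA : A ∈ (map (Ideal.Quotient.mk I)).ker) :
    trace (A : Matrix n n R) - Fintype.card n ∈ I ^ 2 := by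
  have h := det_one_add_sub_one_add_trace_mem_sq (mem_ker_map_mk_iff.mp hA)
  rwa [add_sub_cancel, A.det_coe, sub_add_cancel_left, neg_mem_iff, trace_sub, trace_one] at h

end SpecialLinearGroup

end Matrix

/-- If `A ∈ SL₂(R)` lies in the kernel of the entrywise map
`SL₂(R) → SL₂(R/I)`, then `tr A - 2 ∈ I²`. -/
theorem stmt_0 (R : Type*) [CommRing R] (I : Ideal R)
    (A : Matrix.SpecialLinearGroup (Fin 2) R)
    (hA : A ∈ (Matrix.SpecialLinearGroup.map (Ideal.Quotient.mk I)).ker) :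
    Matrix.trace (A : Matrix (Fin 2) (Fin 2) R) - 2 ∈ I * I := by
  simpa [sq] using Matrix.SpecialLinearGroup.trace_sub_card_mem_sq_of_mem_ker_map hA
end

section
/- Let α be a Gaussian integer with N(α) > 11, and let γ be an element of Γ(α), the kernel of the homomorphism SL₂(ℤ[i]) → SL₂(ℤ[i]/⟨α⟩) induced by the quotient map. If tr(γ) ≠ 2, then the complex absolute value of tr(γ) is strictly greater than 9. -/
/-!
Write `γ = 1 + α • A`. Comparing `det γ = 1` with the expansion
`det (1 + α • A) = 1 + α * tr A + α² * (…)` shows that `tr γ - 2 = α * tr A` is a multiple of `α²`.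
So if `tr γ ≠ 2`, then `|tr γ - 2| ≥ |α|² = N(α) ≥ 12`, whence `|tr γ| ≥ 10`.
-/

open GaussianInt

namespace Matrix

variable {n R : Type*} [Fintype n] [DecidableEq n] [CommRing R]

theorem sq_dvd_trace_one_add_smul_sub_card {r : R} {A : Matrix n n R}
    (hdet : det (1 + r • A) = 1) : r ^ 2 ∣ trace (1 + r • A) - Fintype.card n := by
  rw [det_one_add_smul] at hdet
  refine ⟨-(det (1 + (Polynomial.X : Polynomial R) • A.map Polynomial.C)).divX.divX.eval r, ?_⟩
  rw [trace_add, trace_one, trace_smul, smul_eq_mul]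
  linear_combination hdet

namespace SpecialLinearGroup

theorem exists_coe_eq_one_add_smul_of_mem_ker_map {α : R} {γ : SpecialLinearGroup n R}
    (hγ : γ ∈ (map (Ideal.Quotient.mk (Ideal.span {α}))).ker) :
    ∃ A : Matrix n n R, (γ : Matrix n n R) = 1 + α • A := by
  have hmap : (Ideal.Quotient.mk (Ideal.span {α})).mapMatrix (γ : Matrix n n R) =
      (Ideal.Quotient.mk (Ideal.span {α})).mapMatrix 1 := by
    rw [_root_.map_one]
    have h1 := MonoidHom.mem_ker.1 hγ
    exact congrArg Subtype.val h1
  have hdvd (i j : n) : α ∣ (γ : Matrix n n R) i j - (1 : Matrix n n R) i j := by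
    rw [← Ideal.mem_span_singleton, ← Ideal.Quotient.eq]
    exact congrFun (congrFun hmap i) j
  choose A hA using hdvd
  exact ⟨of A, Matrix.ext fun i j => by simp [← hA i j]⟩

theorem sq_dvd_trace_sub_card_of_mem_ker_map {α : R} {γ : SpecialLinearGroup n R}
    (hγ : γ ∈ (map (Ideal.Quotient.mk (Ideal.span {α}))).ker) :
    α ^ 2 ∣ trace (γ : Matrix n n R) - Fintype.card n := by
  obtain ⟨A, hA⟩ := exists_coe_eq_one_add_smul_of_mem_ker_map hγ
  rw [hA]
  exact sq_dvd_trace_one_add_smul_sub_card (hA ▸ γ.prop)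

end SpecialLinearGroup

end Matrix

namespace GaussianInt

theorem sq_norm_toComplex (x : GaussianInt) : ‖toComplex x‖ ^ 2 = x.norm := by
  rw [Complex.sq_norm, intCast_real_norm]

theorem norm_toComplex_le_of_dvd {x y : GaussianInt} (hxy : x ∣ y) (hy : y ≠ 0) :
    ‖toComplex x‖ ≤ ‖toComplex y‖ := by
  obtain ⟨k, rfl⟩ := hxy
  have hk : 1 ≤ ‖toComplex k‖ := by
    rw [← one_le_sq_iff₀ (_root_.norm_nonneg _), sq_norm_toComplex]
    exact_mod_cast norm_pos.2 (right_ne_zero_of_mul hy)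
  rw [map_mul, norm_mul]
  exact le_mul_of_one_le_right (_root_.norm_nonneg _) hk

end GaussianInt

/-- If `N(α) > 11` and `γ ∈ Γ(α)` has `tr γ ≠ 2`, then `|tr γ| > 9`. -/
theorem stmt_2 (α : GaussianInt) (hα : 11 < α.norm)
    (γ : Matrix.SpecialLinearGroup (Fin 2) GaussianInt)
    (hγ : γ ∈ (Matrix.SpecialLinearGroup.map
      (Ideal.Quotient.mk (Ideal.span {α}))).ker)
    (htr : Matrix.trace (γ : Matrix (Fin 2) (Fin 2) GaussianInt) ≠ 2) :
    9 < ‖toComplex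
      (Matrix.trace (γ : Matrix (Fin 2) (Fin 2) GaussianInt))‖ := by
  set t := Matrix.trace (γ : Matrix (Fin 2) (Fin 2) GaussianInt)
  have hdvd : α ^ 2 ∣ t - 2 := by
    simpa using Matrix.SpecialLinearGroup.sq_dvd_trace_sub_card_of_mem_ker_map hγ
  have hbound : 12 ≤ ‖toComplex (t - 2)‖ :=
    calc (12 : ℝ) ≤ α.norm := by exact_mod_cast hα
      _ = ‖toComplex (α ^ 2)‖ := by rw [map_pow, norm_pow, sq_norm_toComplex]
      _ ≤ ‖toComplex (t - 2)‖ := norm_toComplex_le_of_dvd hdvd (sub_ne_zero.2 htr)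
  have htriangle : ‖toComplex (t - 2)‖ ≤ ‖toComplex t‖ + 2 := by
    rw [map_sub, map_ofNat]
    simpa using norm_sub_le (toComplex t) 2
  linarith
end

section
/- Let α be a Gaussian integer with N(α) > 11. Then no element γ of Γ(α), the kernel of the homomorphism SL₂(ℤ[i]) → SL₂(ℤ[i]/⟨α⟩) induced by the quotient map, satisfies tr(γ) = −2. -/
/-! Writing `γ = 1 + α M`, the identity `det (1 + α M) = 1 + α tr M + α² det M` and `det γ = 1`
give `tr γ - 2 = α tr M = -α² det M`. So `tr γ = -2` forces `α² ∣ 4`, hence `N(α)² ∣ 16`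
and `N(α) ≤ 4`. -/

namespace Matrix

variable {R : Type*} [CommRing R]

theorem det_one_add_smul_fin_two (a : R) (M : Matrix (Fin 2) (Fin 2) R) :
    (1 + a • M).det = 1 + a * M.trace + a ^ 2 * M.det := by
  simp only [det_fin_two, trace_fin_two, add_apply, smul_apply, smul_eq_mul, one_apply_eq,
    one_apply_ne zero_ne_one, one_apply_ne one_ne_zero]
  ring

namespace SpecialLinearGroup

theorem exists_eq_one_add_smul_of_mem_ker_map_quotient {n : Type*} [Fintype n] [DecidableEq n]
    {a : R} {γ : SpecialLinearGroup n R}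
    (hγ : γ ∈ (map (Ideal.Quotient.mk (Ideal.span {a}))).ker) :
    ∃ M : Matrix n n R, (γ : Matrix n n R) = 1 + a • M := by
  have hdvd : ∀ i j, a ∣ ((γ : Matrix n n R) - 1) i j := fun i j => by
    rw [← Ideal.mem_span_singleton, ← Ideal.Quotient.eq_zero_iff_mem, sub_apply, map_sub]
    have := (ext_iff _ _).mp (MonoidHom.mem_ker.mp hγ) i j
    simp only [map_apply_coe, RingHom.mapMatrix_apply, map_apply, coe_one] at this
    rw [this, one_apply, one_apply]
    split_ifs <;> simp
  choose M hM using hdvd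
  exact ⟨of M, by ext i j; simp [← hM]⟩

theorem sq_dvd_trace_sub_two_of_mem_ker_map_quotient {a : R} {γ : SpecialLinearGroup (Fin 2) R}
    (hγ : γ ∈ (map (Ideal.Quotient.mk (Ideal.span {a}))).ker) :
    a ^ 2 ∣ (γ : Matrix (Fin 2) (Fin 2) R).trace - 2 := by
  obtain ⟨M, hM⟩ := exists_eq_one_add_smul_of_mem_ker_map_quotient hγ
  have hdet : 1 + a * M.trace + a ^ 2 * M.det = 1 := by
    rw [← det_one_add_smul_fin_two, ← hM, γ.det_coe]
  refine ⟨-M.det, ?_⟩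
  rw [hM, trace_add, trace_smul, trace_one, Fintype.card_fin, smul_eq_mul]
  linear_combination hdet

end SpecialLinearGroup

end Matrix

theorem GaussianInt.norm_le_four_of_sq_dvd_four {a : GaussianInt} (h : a ^ 2 ∣ 4) :
    a.norm ≤ 4 := by
  have h16 : a.norm ^ 2 ∣ 16 := by
    obtain ⟨c, hc⟩ := h
    exact ⟨c.norm, by rw [sq, ← Zsqrtd.norm_mul, ← Zsqrtd.norm_mul, ← sq, ← hc]; decide⟩
  nlinarith [Int.le_of_dvd (by norm_num) h16, Zsqrtd.norm_nonneg (by norm_num) a]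

/-- If `N(α) > 11`, no `γ ∈ Γ(α)` has `tr γ = -2`. -/
theorem stmt_3 (α : GaussianInt) (hα : 11 < α.norm)
    (γ : Matrix.SpecialLinearGroup (Fin 2) GaussianInt)
    (hγ : γ ∈ (Matrix.SpecialLinearGroup.map
      (Ideal.Quotient.mk (Ideal.span {α}))).ker) :
    Matrix.trace (γ : Matrix (Fin 2) (Fin 2) GaussianInt) ≠ -2 := by
  intro htr
  have h := Matrix.SpecialLinearGroup.sq_dvd_trace_sub_two_of_mem_ker_map_quotient hγ
  rw [htr, show (-2 - 2 : GaussianInt) = -4 by norm_num, dvd_neg] at h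
  linarith [GaussianInt.norm_le_four_of_sq_dvd_four h]
end

section
/- Let γ be an element of Γ(3+2i), the kernel of the homomorphism SL₂(ℤ[i]) → SL₂(ℤ[i]/⟨3+2i⟩) induced by the quotient map. If tr(γ) ≠ 2, then the complex absolute value of tr(γ) is at least 11. -/
/-!
For `γ ∈ SL₂(R)` one has `tr γ - 2 = -det (γ - 1)`. If `γ ≡ 1` modulo an ideal `I`, the entries
of `γ - 1` lie in `I`, so `tr γ ≡ 2` modulo `I²`. For `I = (3+2i)` a nonzero multiple of
`(3+2i)²` has absolute value at least `|3+2i|² = 13`, hence `|tr γ| ≥ 13 - 2 = 11`.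
-/

open GaussianInt

namespace Matrix

variable {R : Type*} [CommRing R]

theorem det_sub_one_fin_two (A : Matrix (Fin 2) (Fin 2) R) :
    (A - 1).det = A.det - A.trace + 1 := by
  simp only [det_fin_two, trace_fin_two, sub_apply, one_apply_eq, one_apply_ne, ne_eq,
    Fin.zero_eq_one_iff, Fin.one_eq_zero_iff, OfNat.ofNat_ne_one, not_false_eq_true, sub_zero]
  ring

theorem det_fin_two_mem_sq {I : Ideal R} {M : Matrix (Fin 2) (Fin 2) R} (hM : ∀ i j, M i j ∈ I) :
    M.det ∈ I ^ 2 := by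
  rw [det_fin_two, sq]
  exact Ideal.sub_mem _ (Ideal.mul_mem_mul (hM 0 0) (hM 1 1)) (Ideal.mul_mem_mul (hM 0 1) (hM 1 0))

namespace SpecialLinearGroup

variable {n : Type*} [Fintype n] [DecidableEq n]

theorem sub_one_apply_mem_of_mem_ker_map {I : Ideal R} {γ : SpecialLinearGroup n R}
    (hγ : γ ∈ (map (Ideal.Quotient.mk I)).ker) (i j : n) :
    ((γ : Matrix n n R) - 1) i j ∈ I := by
  have hij := congr_arg (fun g : SpecialLinearGroup n (R ⧸ I) => (g : Matrix n n (R ⧸ I)) i j)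
    (MonoidHom.mem_ker.1 hγ)
  simp only [map_apply_coe, RingHom.mapMatrix_apply, map_apply, coe_one] at hij
  rw [sub_apply, ← Ideal.Quotient.eq, hij, one_apply, one_apply]
  split_ifs <;> simp

theorem trace_sub_two_eq_neg_det_sub_one (γ : SpecialLinearGroup (Fin 2) R) :
    (γ : Matrix (Fin 2) (Fin 2) R).trace - 2 = -((γ : Matrix (Fin 2) (Fin 2) R) - 1).det := by
  rw [det_sub_one_fin_two, γ.det_coe]
  ring

theorem trace_sub_two_mem_sq_of_mem_ker_map {I : Ideal R} {γ : SpecialLinearGroup (Fin 2) R}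
    (hγ : γ ∈ (map (Ideal.Quotient.mk I)).ker) :
    (γ : Matrix (Fin 2) (Fin 2) R).trace - 2 ∈ I ^ 2 := by
  rw [trace_sub_two_eq_neg_det_sub_one]
  exact neg_mem (det_fin_two_mem_sq (sub_one_apply_mem_of_mem_ker_map hγ))

end SpecialLinearGroup

end Matrix

namespace GaussianInt

theorem norm_toComplex_le_of_dvd_s4 {x z : GaussianInt} (hxz : x ∣ z) (hz : z ≠ 0) :
    ‖(x : ℂ)‖ ≤ ‖(z : ℂ)‖ := by
  obtain ⟨y, rfl⟩ := hxz
  have hnorm : x.norm ≤ (x * y).norm := by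
    have := norm_le_norm_mul_left x (right_ne_zero_of_mul hz)
    rwa [← abs_natCast_norm x, ← abs_natCast_norm (x * y), Nat.cast_le]
  have hsq : ‖(x : ℂ)‖ ^ 2 ≤ ‖((x * y : GaussianInt) : ℂ)‖ ^ 2 := by
    rw [Complex.sq_norm, Complex.sq_norm, ← intCast_real_norm, ← intCast_real_norm]
    exact_mod_cast hnorm
  exact (sq_le_sq₀ (_root_.norm_nonneg _) (_root_.norm_nonneg _)).1 hsq

end GaussianInt

/-- If `γ ∈ Γ(3+2i)` has `tr γ ≠ 2`, then `|tr γ| ≥ 11`. -/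
theorem stmt_4 (γ : Matrix.SpecialLinearGroup (Fin 2) GaussianInt)
    (hγ : γ ∈ (Matrix.SpecialLinearGroup.map
      (Ideal.Quotient.mk (Ideal.span {(⟨3, 2⟩ : GaussianInt)}))).ker)
    (htr : Matrix.trace (γ : Matrix (Fin 2) (Fin 2) GaussianInt) ≠ 2) :
    11 ≤ ‖(toComplex
      (Matrix.trace (γ : Matrix (Fin 2) (Fin 2) GaussianInt)))‖ := by
  set t := Matrix.trace (γ : Matrix (Fin 2) (Fin 2) GaussianInt)
  have hdvd : (⟨3, 2⟩ : GaussianInt) ^ 2 ∣ t - 2 := by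
    have := Matrix.SpecialLinearGroup.trace_sub_two_mem_sq_of_mem_ker_map hγ
    rwa [Ideal.span_singleton_pow, Ideal.mem_span_singleton] at this
  have h13 : ‖((⟨3, 2⟩ ^ 2 : GaussianInt) : ℂ)‖ = 13 := by
    rw [map_pow, norm_pow, Complex.sq_norm, ← intCast_real_norm]
    norm_num [Zsqrtd.norm]
  have hle := norm_toComplex_le_of_dvd_s4 hdvd (sub_ne_zero.2 htr)
  rw [h13, map_sub, map_ofNat] at hle
  linarith [norm_sub_le (t : ℂ) 2, Complex.norm_two]
end

section
/- Let α be a Gaussian integer with N(α) > 11, let γ be an element of Γ(α), the kernel of the homomorphism SL₂(ℤ[i]) → SL₂(ℤ[i]/⟨α⟩) induced by the quotient map, with tr(γ) ≠ 2, and let w be a complex number such that 2·cosh(w/2) equals the image of tr(γ) in ℂ. Then |Re w| > 2·arccosh(9/2). -/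
open GaussianInt

/-- The real inverse hyperbolic cosine, `arccosh x = log (x + √(x² - 1))`. -/
noncomputable def arccosh (x : ℝ) : ℝ := Real.log (x + Real.sqrt (x ^ 2 - 1))

/-!
If `γ ≡ 1 (mod α)` and `det γ = 1`, then `tr γ - 2 = bc - (a - 1)(d - 1)` is divisible by `α²`.
As `tr γ ≠ 2`, this gives `|tr γ - 2|² = N(tr γ - 2) ≥ N(α)² ≥ 144`, hence `|tr γ| ≥ 10`.
Since `|cosh z| ≤ cosh (Re z)`, we get `cosh (Re w / 2) ≥ 5 > 9/2`, and `arcosh` is increasing.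
-/

namespace Matrix

variable {R : Type*} [CommRing R]

theorem trace_sub_two_mem_sq {I : Ideal R} {A : Matrix (Fin 2) (Fin 2) R} (hdet : A.det = 1)
    (hA : ∀ i j, (A - 1) i j ∈ I) : A.trace - 2 ∈ I ^ 2 := by
  have htrace : A.trace - 2 = A 0 1 * A 1 0 - (A 0 0 - 1) * (A 1 1 - 1) := by
    rw [trace_fin_two]
    rw [det_fin_two] at hdet
    linear_combination hdet
  have h00 := hA 0 0
  have h01 := hA 0 1
  have h10 := hA 1 0
  have h11 := hA 1 1
  simp only [sub_apply, one_apply_eq, one_apply_ne zero_ne_one, one_apply_ne one_ne_zero,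
    sub_zero] at h00 h01 h10 h11
  rw [htrace, sq]
  exact sub_mem (Ideal.mul_mem_mul h01 h10) (Ideal.mul_mem_mul h00 h11)

end Matrix

namespace GaussianInt

theorem norm_le_norm_of_dvd {x y : GaussianInt} (h : x ∣ y) (hy : y ≠ 0) : x.norm ≤ y.norm := by
  obtain ⟨k, rfl⟩ := h
  have hk : 1 ≤ k.norm := norm_pos.mpr (right_ne_zero_of_mul hy)
  rw [Zsqrtd.norm_mul]
  nlinarith [norm_nonneg x]

theorem norm_le_norm_toComplex_of_sq_dvd {x y : GaussianInt} (h : x ^ 2 ∣ y) (hy : y ≠ 0) :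
    (x.norm : ℝ) ≤ ‖(y : ℂ)‖ := by
  have hle : x.norm ^ 2 ≤ y.norm := by
    have := norm_le_norm_of_dvd h hy
    rwa [sq, Zsqrtd.norm_mul, ← sq] at this
  refine (pow_le_pow_iff_left₀ (by exact_mod_cast norm_nonneg x) (_root_.norm_nonneg _)
    two_ne_zero).1 ?_
  rw [Complex.sq_norm, ← intCast_real_norm]
  exact_mod_cast hle

end GaussianInt

theorem Complex.norm_cosh_le (z : ℂ) : ‖cosh z‖ ≤ Real.cosh z.re := by
  rw [cosh, Real.cosh_eq, norm_div, Complex.norm_two, ← neg_re, ← norm_exp, ← norm_exp]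
  gcongr
  exact norm_add_le _ _

theorem Real.arcosh_lt_abs_of_lt_cosh {x y : ℝ} (hx : 0 < x) (h : x < cosh y) :
    arcosh x < |y| := by
  rw [← arcosh_cosh (abs_nonneg y), cosh_abs]
  exact (arcosh_lt_arcosh hx (cosh_pos y)).2 h

theorem arccosh_eq_arcosh : arccosh = Real.arcosh := rfl

/-- If `N(α) > 11`, `γ ∈ Γ(α)` with `tr γ ≠ 2`, and
`2·cosh(w/2) = tr γ` in `ℂ`, then `|Re w| > 2·arccosh(9/2)`. -/
theorem stmt_8 (α : GaussianInt) (hα : 11 < α.norm)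
    (γ : Matrix.SpecialLinearGroup (Fin 2) GaussianInt)
    (hγ : γ ∈ (Matrix.SpecialLinearGroup.map
      (Ideal.Quotient.mk (Ideal.span {α}))).ker)
    (htr : Matrix.trace (γ : Matrix (Fin 2) (Fin 2) GaussianInt) ≠ 2)
    (w : ℂ)
    (hw : 2 * Complex.cosh (w / 2)
      = toComplex (Matrix.trace (γ : Matrix (Fin 2) (Fin 2) GaussianInt))) :
    2 * arccosh (9 / 2) < |w.re| := by
  set t := Matrix.trace (γ : Matrix (Fin 2) (Fin 2) GaussianInt)
  have hdvd : α ^ 2 ∣ t - 2 := by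
    rw [← Ideal.mem_span_singleton, ← Ideal.span_singleton_pow]
    exact Matrix.SpecialLinearGroup.trace_sub_two_mem_sq_of_mem_ker_map hγ
  have h12 : 12 ≤ ‖toComplex t - 2‖ := by
    have := GaussianInt.norm_le_norm_toComplex_of_sq_dvd hdvd (sub_ne_zero.mpr htr)
    rw [map_sub, map_ofNat] at this
    exact le_trans (by exact_mod_cast (hα : (12 : ℤ) ≤ α.norm)) this
  have h5 : 5 ≤ Real.cosh (w.re / 2) := by
    have htri := norm_sub_le (toComplex t) 2
    have hcosh := Complex.norm_cosh_le (w / 2)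
    rw [← hw] at htri h12
    rw [norm_mul, Complex.norm_two] at htri
    rw [Complex.div_ofNat_re] at hcosh
    linarith
  have := Real.arcosh_lt_abs_of_lt_cosh (by norm_num : (0 : ℝ) < 9 / 2)
    (by linarith : 9 / 2 < Real.cosh (w.re / 2))
  rw [abs_div, abs_two] at this
  rw [arccosh_eq_arcosh]
  linarith
end
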